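/- Let H be a Hopf algebra over a field K and A a finite-dimensional H-comodule algebra with multiplication m and dual basis (v_i), (v_i*) of A. Then the map φ(m) : A → A ⊗ A*, a ↦ Σ_i a v_i ⊗ v_i*, is an injective morphism of H-comodule algebras (a monomorphism in the category of algebras in M^H), where A ⊗ A* carries the internal-endomorphism algebra structure. Consequently, the algebras of the form V ⊗ V* for finite-dimensional right H-comodules V form a system of cogenerators for the category of finite-dimensional algebras in M^H. -/

import Mathlib

open TensorProduct LinearMap

section ComodPre
variable (K : Type u) [Field K] (H : Type u) [Ring H] [HopfAlgebra K H]

/-- `ρ` is a right `H`-comodule structure on `V`. -/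
def IsComodule {V : Type u} [AddCommMonoid V] [Module K V]
    (ρ : V →ₗ[K] V ⊗[K] H) : Prop :=
  (∀ v : V, (TensorProduct.assoc K V H H) ((LinearMap.rTensor H ρ) (ρ v)) =
      (LinearMap.lTensor V (Coalgebra.comul (R := K))) (ρ v)) ∧
  (∀ v : V, (TensorProduct.rid K V)
      ((LinearMap.lTensor V (Coalgebra.counit (R := K))) (ρ v)) = v)

/-- `f` is a morphism of right `H`-comodules. -/
def IsComodHom {X Y : Type u} [AddCommMonoid X] [Module K X]
    [AddCommMonoid Y] [Module K Y]
    (ρX : X →ₗ[K] X ⊗[K] H) (ρY : Y →ₗ[K] Y ⊗[K] H) (f : X →ₗ[K] Y) : Prop :=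
  ∀ x : X, ρY (f x) = (LinearMap.rTensor H f) (ρX x)

/-- The tensor product coaction on `X ⊗ Y` in the monoidal category `M^H`. -/
noncomputable def tensorCoaction {X Y : Type u} [AddCommMonoid X] [Module K X]
    [AddCommMonoid Y] [Module K Y]
    (ρX : X →ₗ[K] X ⊗[K] H) (ρY : Y →ₗ[K] Y ⊗[K] H) :
    (X ⊗[K] Y) →ₗ[K] (X ⊗[K] Y) ⊗[K] H :=
  (TensorProduct.map LinearMap.id (LinearMap.mul' K H)) ∘ₗ
    (TensorProduct.tensorTensorTensorComm K X H Y H).toLinearMap ∘ₗ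
      (TensorProduct.map ρX ρY)

/-- The trivial coaction on the monoidal unit `K`: `k ↦ k ⊗ 1`. -/
noncomputable def trivialCoaction : K →ₗ[K] K ⊗[K] H :=
  (TensorProduct.mk K K H).flip 1

variable (V : Type u) [AddCommGroup V] [Module K V] [FiniteDimensional K V]

/-- The multiplication `1_V ⊗ ev_V ⊗ 1_{V*}` of the internal-endomorphism algebra
`V ⊗ V*` (for a finite-dimensional `V`). -/
noncomputable def endMul :
    ((V ⊗[K] Module.Dual K V) ⊗[K] (V ⊗[K] Module.Dual K V)) →ₗ[K]
      (V ⊗[K] Module.Dual K V) :=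
  (LinearMap.rTensor (Module.Dual K V)
      ((TensorProduct.rid K V).toLinearMap ∘ₗ
        (LinearMap.lTensor V (contractLeft K V)) ∘ₗ
          (TensorProduct.assoc K V (Module.Dual K V) V).toLinearMap)) ∘ₗ
    (TensorProduct.assoc K (V ⊗[K] Module.Dual K V) V (Module.Dual K V)).symm.toLinearMap

/-- The comultiplication `1_{V*} ⊗ co_V ⊗ 1_V` of the comatrix coalgebra `V* ⊗ V`
(for a finite-dimensional `V`). -/
noncomputable def comatrixComul :
    (Module.Dual K V ⊗[K] V) →ₗ[K]
      ((Module.Dual K V ⊗[K] V) ⊗[K] (Module.Dual K V ⊗[K] V)) :=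
  (TensorProduct.assoc K (Module.Dual K V) V (Module.Dual K V ⊗[K] V)).symm.toLinearMap ∘ₗ
    (LinearMap.lTensor (Module.Dual K V)
      ((TensorProduct.assoc K V (Module.Dual K V) V).toLinearMap ∘ₗ
        (LinearMap.rTensor V (coevaluation K V)) ∘ₗ
          (TensorProduct.lid K V).symm.toLinearMap))

end ComodPre

section Stmt14
variable (K : Type u) [Field K] (H : Type u) [Ring H] [HopfAlgebra K H]

/-- A finite-dimensional algebra in the monoidal category `M^H` of right
`H`-comodules, i.e. a finite-dimensional `H`-comodule algebra. -/
structure FDComodAlg : Type (u + 1) where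
  carrier : Type u
  [ag : AddCommGroup carrier]
  [md : Module K carrier]
  [fd : FiniteDimensional K carrier]
  mul : carrier ⊗[K] carrier →ₗ[K] carrier
  one : K →ₗ[K] carrier
  coact : carrier →ₗ[K] carrier ⊗[K] H
  mul_assoc' : ∀ x : (carrier ⊗[K] carrier) ⊗[K] carrier,
    mul (LinearMap.rTensor carrier mul x) =
    mul (LinearMap.lTensor carrier mul
      ((TensorProduct.assoc K carrier carrier carrier) x))
  one_mul' : ∀ a : carrier, mul ((one 1) ⊗ₜ[K] a) = a
  mul_one' : ∀ a : carrier, mul (a ⊗ₜ[K] (one 1)) = a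
  comod : IsComodule K H coact
  mul_hom : IsComodHom K H (tensorCoaction K H coact coact) coact mul
  one_hom : IsComodHom K H (trivialCoaction K H) coact one

attribute [instance] FDComodAlg.ag FDComodAlg.md FDComodAlg.fd

/-- A finite-dimensional right `H`-comodule together with the dual comodule structure
on `V*` (the right dual in `M^H`, defined using the antipode), for which evaluation
and coevaluation are morphisms of comodules. -/
structure DualizedComod : Type (u + 1) where
  V : Type u
  [ag : AddCommGroup V]
  [md : Module K V]
  [fd : FiniteDimensional K V]
  coact : V →ₗ[K] V ⊗[K] H
  comod : IsComodule K H coact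
  dcoact : Module.Dual K V →ₗ[K] Module.Dual K V ⊗[K] H
  dcomod : IsComodule K H dcoact
  ev_hom : IsComodHom K H (tensorCoaction K H dcoact coact) (trivialCoaction K H)
    (contractLeft K V)
  coev_hom : IsComodHom K H (trivialCoaction K H) (tensorCoaction K H coact dcoact)
    (coevaluation K V)

attribute [instance] DualizedComod.ag DualizedComod.md DualizedComod.fd

/-- Morphisms of `H`-comodule algebras. -/
def IsCAHom (B₁ B₂ : FDComodAlg K H) (f : B₁.carrier →ₗ[K] B₂.carrier) : Prop :=
  (∀ x, f (B₁.mul x) = B₂.mul (TensorProduct.map f f x)) ∧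
  (∀ k : K, f (B₁.one k) = B₂.one k) ∧
  IsComodHom K H B₁.coact B₂.coact f

variable {K H}

/-- The map `φ(m) : A → A ⊗ A*`, `a ↦ Σ_i (a vᵢ) ⊗ vᵢ*`, i.e. the left regular
representation of `A` in its internal endomorphism algebra. -/
noncomputable def phiMap (Al : Type u) [AddCommGroup Al] [Module K Al]
    [FiniteDimensional K Al] (mulA : Al ⊗[K] Al →ₗ[K] Al) :
    Al →ₗ[K] Al ⊗[K] Module.Dual K Al :=
  (LinearMap.rTensor (Module.Dual K Al) mulA) ∘ₗ
    (TensorProduct.assoc K Al Al (Module.Dual K Al)).symm.toLinearMap ∘ₗ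
      (LinearMap.lTensor Al (coevaluation K Al)) ∘ₗ
        (TensorProduct.rid K Al).symm.toLinearMap


/-!
Under `V ⊗ V* ≃ End V`, `endMul` becomes composition, the coevaluation becomes the identity and
`φ(m)(a)` becomes left multiplication by `a`; so `φ(m)` is injective (evaluate at the unit) and is
an algebra map by associativity and the unit law. It is a comodule map because it is the composite
`A ≅ A ⊗ K → A ⊗ (A ⊗ A*) ≅ (A ⊗ A) ⊗ A* → A ⊗ A*` of comodule maps built from the coevaluation
and `m`.

For the cogenerators it suffices that every finite-dimensional comodule `V` has a right dual, since
then `φ(m) : B → B ⊗ B*` separates morphisms into `B`. If `C` is the matrix of the coaction in a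
basis, the antipode axioms say that `S(C)` is inverse to `C`, and `V*` coacts through `S(C)ᵀ`. The
needed identity `Δ(S c_ij) = ∑ₖ S(c_kj) ⊗ S(c_ik)` holds because both sides form an inverse of
the matrix `Δ(C)` over `H ⊗ H`.
-/

open Module Coalgebra HopfAlgebra

section EndAlgebra

variable {V : Type u} [AddCommGroup V] [Module K V] [FiniteDimensional K V]

variable (K V) in
noncomputable def tensorDualEquivEnd : V ⊗[K] Dual K V ≃ₗ[K] Module.End K V :=
  TensorProduct.comm K V (Dual K V) ≪≫ₗ dualTensorHomEquiv K V V

@[simp]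
lemma tensorDualEquivEnd_tmul_apply (v w : V) (f : Dual K V) :
    tensorDualEquivEnd K V (v ⊗ₜ f) w = f w • v := by
  simp [tensorDualEquivEnd]

lemma tensorDualEquivEnd_endMul (s t : V ⊗[K] Dual K V) :
    tensorDualEquivEnd K V (endMul K V (s ⊗ₜ t)) =
      tensorDualEquivEnd K V s * tensorDualEquivEnd K V t := by
  induction s using TensorProduct.induction_on with
  | zero => simp
  | add s s' hs hs' => simp [add_tmul, hs, hs', add_mul]
  | tmul v f =>
    induction t using TensorProduct.induction_on with
    | zero => simp
    | add t t' ht ht' => simp [tmul_add, ht, ht', mul_add]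
    | tmul w g => ext x; simp [endMul, smul_smul, mul_comm]

lemma tensorDualEquivEnd_sum_basis {ι : Type*} [Fintype ι] (b : Basis ι K V) :
    tensorDualEquivEnd K V (∑ i, b i ⊗ₜ b.coord i) = 1 := by
  ext x; simp [b.sum_repr]

lemma coevaluation_apply_one_eq_sum_basis {ι : Type*} [Fintype ι] (b : Basis ι K V) :
    coevaluation K V 1 = ∑ i, b i ⊗ₜ b.coord i := by
  apply (tensorDualEquivEnd K V).injective
  rw [coevaluation_apply_one, tensorDualEquivEnd_sum_basis, tensorDualEquivEnd_sum_basis]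

lemma tensorDualEquivEnd_coevaluation (k : K) :
    tensorDualEquivEnd K V (coevaluation K V k) = algebraMap K _ k := by
  conv_lhs => rw [← mul_one k, ← smul_eq_mul]
  rw [map_smul, map_smul, coevaluation_apply_one, tensorDualEquivEnd_sum_basis,
    Algebra.algebraMap_eq_smul_one]

lemma tensorDualEquivEnd_phiMap (m : V ⊗[K] V →ₗ[K] V) (a : V) :
    tensorDualEquivEnd K V (phiMap V m a) = m ∘ₗ TensorProduct.mk K V V a := by
  have h (t : V ⊗[K] Dual K V) :
      tensorDualEquivEnd K V (rTensor _ m ((TensorProduct.assoc K V V (Dual K V)).symm (a ⊗ₜ t))) =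
        m ∘ₗ TensorProduct.mk K V V a ∘ₗ tensorDualEquivEnd K V t := by
    induction t using TensorProduct.induction_on with
    | zero => ext; simp
    | add t t' ht ht' => simp only [tmul_add, map_add, ht, ht', comp_add]
    | tmul v f => ext w; simp
  simpa [phiMap, tensorDualEquivEnd_coevaluation, Module.End.one_eq_id] using
    h (coevaluation K V 1)

end EndAlgebra

section LeftRegular

variable {V : Type u} [AddCommGroup V] [Module K V] [FiniteDimensional K V]
  {m : V ⊗[K] V →ₗ[K] V}

lemma phiMap_injective {e : V} (he : ∀ a, m (a ⊗ₜ e) = a) :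
    Function.Injective (phiMap V m) := by
  intro a a' h
  simpa [tensorDualEquivEnd_phiMap, he] using
    LinearMap.congr_fun (congrArg (tensorDualEquivEnd K V) h) e

lemma phiMap_mul (hm : ∀ a b c, m (m (a ⊗ₜ b) ⊗ₜ c) = m (a ⊗ₜ m (b ⊗ₜ c))) (x : V ⊗[K] V) :
    phiMap V m (m x) = endMul K V (TensorProduct.map (phiMap V m) (phiMap V m) x) := by
  induction x using TensorProduct.induction_on with
  | zero => simp
  | add x y hx hy => simp only [map_add, hx, hy]
  | tmul a b =>
    apply (tensorDualEquivEnd K V).injective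
    ext c
    simp [tensorDualEquivEnd_endMul, tensorDualEquivEnd_phiMap, hm]

lemma phiMap_unit {u : K →ₗ[K] V} (hu : ∀ a, m (u 1 ⊗ₜ a) = a) (k : K) :
    phiMap V m (u k) = coevaluation K V k := by
  apply (tensorDualEquivEnd K V).injective
  ext a
  have huk : u k = k • u 1 := by rw [← map_smul, smul_eq_mul, mul_one]
  simp [tensorDualEquivEnd_phiMap, tensorDualEquivEnd_coevaluation, huk, hu]

end LeftRegular

section ComodHom

variable {X Y Z X' Y' : Type u} [AddCommMonoid X] [Module K X] [AddCommMonoid Y] [Module K Y]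
  [AddCommMonoid Z] [Module K Z] [AddCommMonoid X'] [Module K X'] [AddCommMonoid Y'] [Module K Y']
  {ρX : X →ₗ[K] X ⊗[K] H} {ρY : Y →ₗ[K] Y ⊗[K] H} {ρZ : Z →ₗ[K] Z ⊗[K] H}
  {ρX' : X' →ₗ[K] X' ⊗[K] H} {ρY' : Y' →ₗ[K] Y' ⊗[K] H}

lemma tensorCoaction_tmul_of_eq_sum {ι κ : Type*} [Fintype ι] [Fintype κ] {x : X} {y : Y}
    {x' : ι → X} {h : ι → H} {y' : κ → Y} {k : κ → H}
    (hx : ρX x = ∑ i, x' i ⊗ₜ h i) (hy : ρY y = ∑ j, y' j ⊗ₜ k j) :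
    tensorCoaction K H ρX ρY (x ⊗ₜ y) = ∑ i, ∑ j, (x' i ⊗ₜ y' j) ⊗ₜ (h i * k j) := by
  simp only [tensorCoaction, coe_comp, LinearEquiv.coe_coe, Function.comp_apply, map_tmul, hx, hy,
    tmul_sum, sum_tmul, map_sum, tensorTensorTensorComm_tmul, id_coe, id_eq, mul'_apply]
  exact Finset.sum_comm

lemma isComodHom_iff_comp_eq {f : X →ₗ[K] Y} :
    IsComodHom K H ρX ρY f ↔ ρY ∘ₗ f = rTensor H f ∘ₗ ρX :=
  ⟨fun h => LinearMap.ext h, fun h x => LinearMap.congr_fun h x⟩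

lemma isComodHom_id : IsComodHom K H ρX ρX LinearMap.id := by
  simp [IsComodHom]

lemma IsComodHom.comp {g : Y →ₗ[K] Z} {f : X →ₗ[K] Y} (hg : IsComodHom K H ρY ρZ g)
    (hf : IsComodHom K H ρX ρY f) : IsComodHom K H ρX ρZ (g ∘ₗ f) := by
  intro x
  simp [hg (f x), hf x, rTensor_comp_apply]

lemma IsComodHom.tensorMap {f : X →ₗ[K] X'} {g : Y →ₗ[K] Y'} (hf : IsComodHom K H ρX ρX' f)
    (hg : IsComodHom K H ρY ρY' g) :
    IsComodHom K H (tensorCoaction K H ρX ρY) (tensorCoaction K H ρX' ρY')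
      (TensorProduct.map f g) := by
  have natural : TensorProduct.map LinearMap.id (mul' K H) ∘ₗ
      (tensorTensorTensorComm K X' H Y' H).toLinearMap ∘ₗ
        TensorProduct.map (rTensor H f) (rTensor H g) =
      rTensor H (TensorProduct.map f g) ∘ₗ TensorProduct.map LinearMap.id (mul' K H) ∘ₗ
        (tensorTensorTensorComm K X H Y H).toLinearMap := by
    ext; simp
  rw [isComodHom_iff_comp_eq] at hf hg ⊢
  simp only [tensorCoaction, comp_assoc, ← map_comp, hf, hg]
  rw [map_comp]
  simp only [← comp_assoc] at natural ⊢
  rw [natural]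

lemma isComodHom_rid_symm :
    IsComodHom K H ρX (tensorCoaction K H ρX (trivialCoaction K H))
      (TensorProduct.rid K X).symm.toLinearMap := by
  intro x
  simp only [tensorCoaction, coe_comp, Function.comp_apply, LinearEquiv.coe_coe, rid_symm_apply,
    map_tmul]
  induction ρX x using TensorProduct.induction_on with
  | zero => simp
  | add s t hs ht => simp only [add_tmul, map_add, hs, ht]
  | tmul x h => simp [trivialCoaction]

lemma isComodHom_assoc_symm :
    IsComodHom K H (tensorCoaction K H ρX (tensorCoaction K H ρY ρZ))
      (tensorCoaction K H (tensorCoaction K H ρX ρY) ρZ)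
      (TensorProduct.assoc K X Y Z).symm.toLinearMap := by
  have mul_assoc_H : TensorProduct.map LinearMap.id (mul' K H) ∘ₗ
      (tensorTensorTensorComm K (X ⊗[K] Y) H Z H).toLinearMap ∘ₗ
        TensorProduct.map (TensorProduct.map LinearMap.id (mul' K H) ∘ₗ
          (tensorTensorTensorComm K X H Y H).toLinearMap) LinearMap.id ∘ₗ
            (TensorProduct.assoc K (X ⊗[K] H) (Y ⊗[K] H) (Z ⊗[K] H)).symm.toLinearMap =
      rTensor H (TensorProduct.assoc K X Y Z).symm.toLinearMap ∘ₗ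
        TensorProduct.map LinearMap.id (mul' K H) ∘ₗ
          (tensorTensorTensorComm K X H (Y ⊗[K] Z) H).toLinearMap ∘ₗ
            TensorProduct.map LinearMap.id (TensorProduct.map LinearMap.id (mul' K H) ∘ₗ
              (tensorTensorTensorComm K Y H Z H).toLinearMap) := by
    ext; simp [mul_assoc]
  intro w
  induction w using TensorProduct.induction_on with
  | zero => simp
  | add v w hv hw => simp only [map_add, hv, hw]
  | tmul x yz =>
    induction yz using TensorProduct.induction_on with
    | zero => simp
    | add v w hv hw => simp only [tmul_add, map_add, hv, hw]
    | tmul y z =>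
      simpa [tensorCoaction] using LinearMap.congr_fun mul_assoc_H (ρX x ⊗ₜ (ρY y ⊗ₜ ρZ z))

end ComodHom

lemma phiMap_isComodHom {V : Type u} [AddCommGroup V] [Module K V] [FiniteDimensional K V]
    {m : V ⊗[K] V →ₗ[K] V} {ρ : V →ₗ[K] V ⊗[K] H} {ρd : Dual K V →ₗ[K] Dual K V ⊗[K] H}
    (hm : IsComodHom K H (tensorCoaction K H ρ ρ) ρ m)
    (hcoev : IsComodHom K H (trivialCoaction K H) (tensorCoaction K H ρ ρd) (coevaluation K V)) :
    IsComodHom K H ρ (tensorCoaction K H ρ ρd) (phiMap V m) :=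
  (hm.tensorMap isComodHom_id).comp <| isComodHom_assoc_symm.comp <|
    (isComodHom_id.tensorMap hcoev).comp isComodHom_rid_symm

section CoactionMatrix

variable {V W : Type u} [AddCommGroup V] [Module K V] [AddCommGroup W] [Module K W]
  {ι : Type*} [Fintype ι] [DecidableEq ι] (b : Basis ι K V)

lemma sum_tmul_equivFinsuppOfBasisLeft (t : V ⊗[K] W) :
    ∑ i, b i ⊗ₜ equivFinsuppOfBasisLeft b t i = t := by
  conv_rhs => rw [← (equivFinsuppOfBasisLeft b).symm_apply_apply t]
  rw [equivFinsuppOfBasisLeft_symm_apply, Finsupp.sum_fintype]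
  simp

lemma equivFinsuppOfBasisLeft_sum_tmul (w : ι → W) (j : ι) :
    equivFinsuppOfBasisLeft b (∑ i, b i ⊗ₜ w i) j = w j := by
  simp [Finsupp.single_apply]

noncomputable def coactMatrix (ρ : V →ₗ[K] V ⊗[K] H) : Matrix ι ι H :=
  Matrix.of fun i j => equivFinsuppOfBasisLeft b (ρ (b j)) i

variable {ρ : V →ₗ[K] V ⊗[K] H}

lemma coact_basis_eq_sum (j : ι) : ρ (b j) = ∑ i, b i ⊗ₜ coactMatrix b ρ i j :=
  (sum_tmul_equivFinsuppOfBasisLeft b _).symm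

variable {b} (hρ : IsComodule K H ρ)
include hρ

lemma comul_coactMatrix (i j : ι) :
    comul (R := K) (coactMatrix b ρ i j) = ∑ k, coactMatrix b ρ i k ⊗ₜ coactMatrix b ρ k j := by
  have h := hρ.1 (b j)
  simp only [coact_basis_eq_sum b, map_sum, rTensor_tmul, lTensor_tmul, sum_tmul,
    assoc_tmul] at h
  rw [Finset.sum_comm] at h
  simp only [← tmul_sum] at h
  simpa only [equivFinsuppOfBasisLeft_sum_tmul] using
    (congrArg (fun t => equivFinsuppOfBasisLeft b t i) h).symm

lemma counit_coactMatrix (i j : ι) :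
    counit (R := K) (coactMatrix b ρ i j) = (1 : Matrix ι ι K) i j := by
  simpa [coact_basis_eq_sum b, Finsupp.single_apply, Matrix.one_apply, eq_comm] using
    congrArg (b.coord i) (hρ.2 (b j))

lemma algebraMap_counit_coactMatrix (i j : ι) :
    algebraMap K H (counit (coactMatrix b ρ i j)) = (1 : Matrix ι ι H) i j := by
  rw [counit_coactMatrix hρ, Matrix.one_apply, Matrix.one_apply]
  split_ifs <;> simp

lemma coactMatrix_map_antipode_mul : (coactMatrix b ρ).map (antipode K) * coactMatrix b ρ = 1 := by
  ext i j
  rw [← algebraMap_counit_coactMatrix (b := b) hρ, ← mul_antipode_rTensor_comul_apply,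
    comul_coactMatrix hρ, Matrix.mul_apply]
  simp

lemma coactMatrix_mul_map_antipode : coactMatrix b ρ * (coactMatrix b ρ).map (antipode K) = 1 := by
  ext i j
  rw [← algebraMap_counit_coactMatrix (b := b) hρ, ← mul_antipode_lTensor_comul_apply,
    comul_coactMatrix hρ, Matrix.mul_apply]
  simp

lemma sum_antipode_mul_coactMatrix (i j : ι) :
    ∑ k, antipode K (coactMatrix b ρ i k) * coactMatrix b ρ k j = (1 : Matrix ι ι H) i j := by
  rw [← coactMatrix_map_antipode_mul hρ, Matrix.mul_apply]
  rfl

lemma sum_coactMatrix_mul_antipode (i j : ι) :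
    ∑ k, coactMatrix b ρ i k * antipode K (coactMatrix b ρ k j) = (1 : Matrix ι ι H) i j := by
  rw [← coactMatrix_mul_map_antipode hρ, Matrix.mul_apply]
  rfl

lemma comul_antipode_coactMatrix (i j : ι) :
    comul (R := K) (antipode K (coactMatrix b ρ i j)) =
      ∑ k, antipode K (coactMatrix b ρ k j) ⊗ₜ antipode K (coactMatrix b ρ i k) := by
  set C := coactMatrix b ρ
  let L := (Algebra.TensorProduct.includeLeft : H →ₐ[K] H ⊗[K] H).mapMatrix (m := ι)
  let R := (Algebra.TensorProduct.includeRight : H →ₐ[K] H ⊗[K] H).mapMatrix (m := ι)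
  let Δ := (Bialgebra.comulAlgHom K H).mapMatrix (m := ι)
  have hΔC : Δ C = L C * R C := by
    ext p q
    simp [L, R, Δ, C, Matrix.mul_apply, comul_coactMatrix hρ]
  have left_inv : R (C.map (antipode K)) * L (C.map (antipode K)) * Δ C = 1 := by
    rw [hΔC, mul_assoc, ← mul_assoc (L _), ← map_mul, coactMatrix_map_antipode_mul hρ, map_one,
      one_mul, ← map_mul, coactMatrix_map_antipode_mul hρ, map_one]
  have right_inv : Δ C * Δ (C.map (antipode K)) = 1 := by
    rw [← map_mul, coactMatrix_mul_map_antipode hρ, map_one]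
  simpa [L, R, Δ, Matrix.mul_apply] using
    (congrArg (fun M => M i j) (left_inv_eq_right_inv left_inv right_inv)).symm

end CoactionMatrix

section DualCoaction

variable {V : Type u} [AddCommGroup V] [Module K V] {ι : Type*} [Fintype ι] [DecidableEq ι]
  (b : Basis ι K V) (ρ : V →ₗ[K] V ⊗[K] H)

noncomputable def dualCoaction : Dual K V →ₗ[K] Dual K V ⊗[K] H :=
  b.dualBasis.constr K fun l => ∑ i, b.coord i ⊗ₜ antipode K (coactMatrix b ρ l i)

lemma dualCoaction_coord (l : ι) :
    dualCoaction b ρ (b.coord l) = ∑ i, b.coord i ⊗ₜ antipode K (coactMatrix b ρ l i) := by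
  simpa [dualCoaction] using b.dualBasis.constr_basis K
    (fun l => ∑ i, b.coord i ⊗ₜ[K] antipode K (coactMatrix b ρ l i)) l

variable {b ρ} (hρ : IsComodule K H ρ)
include hρ

lemma isComodule_dualCoaction : IsComodule K H (dualCoaction b ρ) := by
  constructor
  · suffices (TensorProduct.assoc K _ H H).toLinearMap ∘ₗ rTensor H (dualCoaction b ρ) ∘ₗ
        dualCoaction b ρ = lTensor _ (comul (R := K)) ∘ₗ dualCoaction b ρ from
      LinearMap.congr_fun this
    refine b.dualBasis.ext fun l => ?_
    simp only [coe_comp, LinearEquiv.coe_coe, Function.comp_apply, Basis.coe_dualBasis,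
      dualCoaction_coord, map_sum, rTensor_tmul, lTensor_tmul, sum_tmul, assoc_tmul,
      comul_antipode_coactMatrix hρ, tmul_sum]
    exact Finset.sum_comm
  · suffices (TensorProduct.rid K _).toLinearMap ∘ₗ lTensor _ (counit (R := K)) ∘ₗ
        dualCoaction b ρ = LinearMap.id from LinearMap.congr_fun this
    refine b.dualBasis.ext fun l => ?_
    simp [dualCoaction_coord, counit_coactMatrix hρ, Matrix.one_apply]

lemma isComodHom_contractLeft :
    IsComodHom K H (tensorCoaction K H (dualCoaction b ρ) ρ) (trivialCoaction K H)
      (contractLeft K V) := by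
  rw [isComodHom_iff_comp_eq]
  refine TensorProduct.ext (b.dualBasis.ext fun l => b.ext fun m => ?_)
  simp only [compr₂ₛₗ_apply, mk_apply, coe_comp, Function.comp_apply, Basis.coe_dualBasis,
    tensorCoaction_tmul_of_eq_sum (dualCoaction_coord b ρ l) (coact_basis_eq_sum b m), map_sum,
    rTensor_tmul, contractLeft_apply, Basis.coord_apply, Basis.repr_self, Finsupp.single_apply,
    ite_tmul, Finset.sum_ite_eq', Finset.mem_univ, if_true, ← tmul_sum,
    sum_antipode_mul_coactMatrix hρ]
  by_cases hlm : l = m <;> simp [trivialCoaction, Matrix.one_apply, hlm, Ne.symm]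

lemma isComodHom_coevaluation [FiniteDimensional K V] :
    IsComodHom K H (trivialCoaction K H) (tensorCoaction K H ρ (dualCoaction b ρ))
      (coevaluation K V) := by
  rw [isComodHom_iff_comp_eq]
  refine LinearMap.ext_ring ?_
  simp only [coe_comp, Function.comp_apply, coevaluation_apply_one_eq_sum_basis b, map_sum,
    tensorCoaction_tmul_of_eq_sum (coact_basis_eq_sum b _) (dualCoaction_coord b ρ _)]
  rw [Finset.sum_comm]
  conv_lhs => enter [2, i]; rw [Finset.sum_comm]
  simp [trivialCoaction, ← tmul_sum, sum_coactMatrix_mul_antipode hρ, Matrix.one_apply, tmul_ite,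
    coevaluation_apply_one_eq_sum_basis b, sum_tmul]

end DualCoaction

noncomputable abbrev DualizedComod.ofComodule (V : Type u) [AddCommGroup V] [Module K V]
    [FiniteDimensional K V] {ρ : V →ₗ[K] V ⊗[K] H} (hρ : IsComodule K H ρ) :
    DualizedComod K H where
  V := V
  coact := ρ
  comod := hρ
  dcoact := dualCoaction (Module.finBasis K V) ρ
  dcomod := isComodule_dualCoaction hρ
  ev_hom := isComodHom_contractLeft hρ
  coev_hom := isComodHom_coevaluation hρ

lemma FDComodAlg.mul_assoc_tmul (A : FDComodAlg K H) (a b c : A.carrier) :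
    A.mul (A.mul (a ⊗ₜ b) ⊗ₜ c) = A.mul (a ⊗ₜ A.mul (b ⊗ₜ c)) := by
  simpa using A.mul_assoc' ((a ⊗ₜ b) ⊗ₜ c)

theorem phiMap_injective_comodule_algebra_hom_and_cogenerators_general
    (A : FDComodAlg K H)
    (ρd : Module.Dual K A.carrier →ₗ[K] Module.Dual K A.carrier ⊗[K] H)
    (hcoev : IsComodHom K H (trivialCoaction K H)
      (tensorCoaction K H A.coact ρd) (coevaluation K A.carrier)) :
    (Function.Injective (phiMap A.carrier A.mul)) ∧
    (∀ x : A.carrier ⊗[K] A.carrier,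
      phiMap A.carrier A.mul (A.mul x) =
      endMul K A.carrier
        (TensorProduct.map (phiMap A.carrier A.mul) (phiMap A.carrier A.mul) x)) ∧
    (∀ k : K, phiMap A.carrier A.mul (A.one k) = coevaluation K A.carrier k) ∧
    IsComodHom K H A.coact (tensorCoaction K H A.coact ρd)
      (phiMap A.carrier A.mul) ∧
    (∀ (B₁ B₂ : FDComodAlg K H) (f g : B₁.carrier →ₗ[K] B₂.carrier),
      IsCAHom K H B₁ B₂ f → IsCAHom K H B₁ B₂ g → f ≠ g →
      ∃ (P : DualizedComod K H)
        (h : B₂.carrier →ₗ[K] P.V ⊗[K] Module.Dual K P.V),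
        (∀ x : B₂.carrier ⊗[K] B₂.carrier,
          h (B₂.mul x) = endMul K P.V (TensorProduct.map h h x)) ∧
        (∀ k : K, h (B₂.one k) = coevaluation K P.V k) ∧
        IsComodHom K H B₂.coact (tensorCoaction K H P.coact P.dcoact) h ∧
        h ∘ₗ f ≠ h ∘ₗ g) := by
  refine ⟨phiMap_injective A.mul_one', phiMap_mul A.mul_assoc_tmul, phiMap_unit A.one_mul',
    phiMap_isComodHom A.mul_hom hcoev, ?_⟩
  intro B₁ B₂ f g _ _ hfg
  refine ⟨.ofComodule B₂.carrier B₂.comod, phiMap B₂.carrier B₂.mul,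
    phiMap_mul B₂.mul_assoc_tmul, phiMap_unit B₂.one_mul',
    phiMap_isComodHom B₂.mul_hom (isComodHom_coevaluation B₂.comod), fun h => hfg ?_⟩
  exact LinearMap.ext fun x => phiMap_injective B₂.mul_one' (LinearMap.congr_fun h x)

set_option maxHeartbeats 1000000 in
/-- **Theorem 4.9.**  Let `H` be a Hopf algebra over a field `K` and `A` a
finite-dimensional `H`-comodule algebra with multiplication `m`.  Then the map
`φ(m) : A → A ⊗ A*`, `a ↦ Σ_i (a vᵢ) ⊗ vᵢ*`, is an injective morphism of `H`-comodule
algebras into the internal endomorphism algebra `A ⊗ A*`.  Consequently the algebras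
`V ⊗ V*`, for `V` a finite-dimensional right `H`-comodule, form a system of
cogenerators of the category of finite-dimensional algebras in `M^H`: they jointly
distinguish parallel morphisms of finite-dimensional `H`-comodule algebras. -/
theorem phiMap_injective_comodule_algebra_hom_and_cogenerators
    (A : FDComodAlg K H)
    (ρd : Module.Dual K A.carrier →ₗ[K] Module.Dual K A.carrier ⊗[K] H)
    (hρd : IsComodule K H ρd)
    (hev : IsComodHom K H (tensorCoaction K H ρd A.coact) (trivialCoaction K H)
      (contractLeft K A.carrier))
    (hcoev : IsComodHom K H (trivialCoaction K H)
      (tensorCoaction K H A.coact ρd) (coevaluation K A.carrier)) :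
    (Function.Injective (phiMap A.carrier A.mul)) ∧
    (∀ x : A.carrier ⊗[K] A.carrier,
      phiMap A.carrier A.mul (A.mul x) =
      endMul K A.carrier
        (TensorProduct.map (phiMap A.carrier A.mul) (phiMap A.carrier A.mul) x)) ∧
    (∀ k : K, phiMap A.carrier A.mul (A.one k) = coevaluation K A.carrier k) ∧
    IsComodHom K H A.coact (tensorCoaction K H A.coact ρd)
      (phiMap A.carrier A.mul) ∧
    (∀ (B₁ B₂ : FDComodAlg K H) (f g : B₁.carrier →ₗ[K] B₂.carrier),
      IsCAHom K H B₁ B₂ f → IsCAHom K H B₁ B₂ g → f ≠ g →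
      ∃ (P : DualizedComod K H)
        (h : B₂.carrier →ₗ[K] P.V ⊗[K] Module.Dual K P.V),
        (∀ x : B₂.carrier ⊗[K] B₂.carrier,
          h (B₂.mul x) = endMul K P.V (TensorProduct.map h h x)) ∧
        (∀ k : K, h (B₂.one k) = coevaluation K P.V k) ∧
        IsComodHom K H B₂.coact (tensorCoaction K H P.coact P.dcoact) h ∧
        h ∘ₗ f ≠ h ∘ₗ g) :=
  phiMap_injective_comodule_algebra_hom_and_cogenerators_general A ρd hcoev

end Stmt14
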